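/- arXiv:2404.17656 — 2 statements merged into one kernel-verified Lean document; each statement's English description precedes it below -/
import Mathlib

section
/- Let R be a commutative ring and A = [[a,b],[c,d]] ∈ M₂(R) a unimodular matrix. If there exists (x,y,z,w) ∈ R⁴ with ax + by + cz + dw = 1 and xw − yz = 0, then A is determinant liftable, i.e., there exists a unimodular B ∈ M₂(R) congruent to A modulo R·det(A) with det(B) = 0. -/
/-!
Given `X = [[x, y], [z, w]]` with `⟨A, X⟩ = 1` (entrywise pairing) and `det X = 0`, put
`C = [[w, -z], [-y, x]]` and `B = A - det A • C`. Expanding the determinant,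
`det B = det A - det A • ⟨A, X⟩ + (det A)² det X = 0`, and `B ≡ A` modulo `det A` by construction.
For unimodularity: modulo the ideal `I` of entries of `B` we have `A ≡ det A • C`, hence
`det A ≡ (det A)² det C = 0`, so `det A ∈ I` and then every entry of `A = B + det A • C` lies in `I`.
-/

open Matrix

namespace Matrix

variable {R : Type*} [CommRing R]

/-- `M` is unimodular when this ideal is `⊤`. -/
def entryIdeal {m n : Type*} (M : Matrix m n R) : Ideal R :=
  Ideal.span {r | ∃ i j, M i j = r}

theorem entryIdeal_fin_two (M : Matrix (Fin 2) (Fin 2) R) :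
    M.entryIdeal = Ideal.span {M 0 0, M 0 1, M 1 0, M 1 1} := by
  rw [entryIdeal]
  congr 1
  ext r
  simp only [Fin.exists_fin_two, Set.mem_ofPred_eq, Set.mem_insert_iff, Set.mem_singleton_iff]
  tauto

theorem entry_mem_entryIdeal {m n : Type*} (M : Matrix m n R) (i : m) (j : n) :
    M i j ∈ M.entryIdeal :=
  Ideal.subset_span ⟨i, j, rfl⟩

theorem sub_smul_apply_sub_mem_span {m n : Type*} (A C : Matrix m n R) (t : R) (i : m) (j : n) :
    (A - t • C) i j - A i j ∈ Ideal.span {t} := by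
  rw [sub_apply, smul_apply, smul_eq_mul, sub_sub_cancel_left]
  exact neg_mem (Ideal.mul_mem_right _ _ (Ideal.mem_span_singleton_self t))

variable {n : Type*} [Fintype n] [DecidableEq n]

theorem det_sub_det_mem_of_sub_mem {I : Ideal R} {A A' : Matrix n n R}
    (h : ∀ i j, A i j - A' i j ∈ I) : A.det - A'.det ∈ I := by
  rw [← Ideal.Quotient.eq, RingHom.map_det, RingHom.map_det]
  congr 1
  ext i j
  exact Ideal.Quotient.eq.mpr (h i j)

theorem entryIdeal_le_of_eq_add_det_smul {A B C : Matrix n n R} (hC : C.det = 0)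
    (hA : A = B + A.det • C) : A.entryIdeal ≤ B.entryIdeal := by
  have hdet : A.det ∈ B.entryIdeal := by
    have hsub : ∀ i j, A i j - (A.det • C) i j ∈ B.entryIdeal := fun i j => by
      rw [← sub_apply, sub_eq_of_eq_add hA]
      exact B.entry_mem_entryIdeal i j
    simpa [det_smul, hC] using det_sub_det_mem_of_sub_mem hsub
  refine Ideal.span_le.mpr ?_
  rintro _ ⟨i, j, rfl⟩
  rw [hA, add_apply, smul_apply, smul_eq_mul]
  exact add_mem (B.entry_mem_entryIdeal i j) (Ideal.mul_mem_right _ _ hdet)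

end Matrix

theorem stmt3 {R : Type*} [CommRing R] (a b c d : R)
    (hA : Ideal.span {a, b, c, d} = (⊤ : Ideal R))
    (h : ∃ x y z w : R, a * x + b * y + c * z + d * w = 1 ∧ x * w - y * z = 0) :
    ∃ B : Matrix (Fin 2) (Fin 2) R,
      Ideal.span {B 0 0, B 0 1, B 1 0, B 1 1} = (⊤ : Ideal R) ∧
      (∀ i j, B i j - (!![a, b; c, d] : Matrix (Fin 2) (Fin 2) R) i j ∈
        Ideal.span {a * d - b * c}) ∧
      B.det = 0 := by
  obtain ⟨x, y, z, w, hpair, hX⟩ := h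
  set A : Matrix (Fin 2) (Fin 2) R := !![a, b; c, d]
  set C : Matrix (Fin 2) (Fin 2) R := !![w, -z; -y, x]
  have hAdet : A.det = a * d - b * c := det_fin_two_of a b c d
  have hC : C.det = 0 := by
    rw [det_fin_two_of]
    linear_combination hX
  refine ⟨A - A.det • C, ?_, ?_, ?_⟩
  · rw [← entryIdeal_fin_two, eq_top_iff, ← hA]
    exact (entryIdeal_fin_two A).ge.trans
      (entryIdeal_le_of_eq_add_det_smul hC (sub_add_cancel A _).symm)
  · rw [← hAdet]
    exact sub_smul_apply_sub_mem_span A C A.det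
  · rw [hAdet, det_fin_two]
    simp only [A, C, Matrix.sub_apply, Matrix.smul_apply, smul_eq_mul, of_apply, cons_val',
      cons_val_zero, cons_val_one, cons_val_fin_one]
    linear_combination (-(a * d - b * c)) * hpair + (a * d - b * c) ^ 2 * hX
end

section
/- Let R be a commutative ring, A ∈ M₂(R) unimodular, and t ∈ R with det(A) ∈ Rt. If R is t-adically complete, then for every n ∈ ℕ there exists Bₙ ∈ M₂(R) congruent to A modulo Rt with det(Bₙ) ∈ R·t^(2ⁿ). In particular, by induction starting from B₀ = A: if det(Bₙ₋₁) ∈ R·t^(2^(n−1)), then there exists Bₙ congruent to Bₙ₋₁ modulo R·t^(2^(n−1)) with det(Bₙ) ∈ R·t^(2ⁿ). -/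
/-!
If `det B = s τ` and the entries of `B` generate the unit ideal modulo `τ`, write
`-s ≡ α b₀₀ + β b₀₁ + γ b₁₀ + δ b₁₁ (mod τ)`. Since `det (B + τ C) = det B + τ ⟨adj B, C⟩ + τ² det C`,
the correction `C = [[δ, -γ], [-β, α]]` kills the term of order `τ`, so `det (B + τ C) ∈ (τ²)`.
Applied with `τ = t ^ 2 ^ (n - 1)` this doubles the `t`-adic order of the determinant at each step.
-/

open Matrix

namespace Matrix

variable {R : Type*} [CommRing R]

def entrySpan (B : Matrix (Fin 2) (Fin 2) R) : Ideal R :=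
  Ideal.span {B 0 0, B 0 1, B 1 0, B 1 1}

theorem det_add_smul_fin_two (B C : Matrix (Fin 2) (Fin 2) R) (τ : R) :
    (B + τ • C).det = B.det
      + τ * (B 0 0 * C 1 1 + B 1 1 * C 0 0 - B 0 1 * C 1 0 - B 1 0 * C 0 1)
      + τ ^ 2 * C.det := by
  simp only [det_fin_two, add_apply, smul_apply, smul_eq_mul]
  ring

theorem entrySpan_sup_eq_top_of_sub_mem {A B : Matrix (Fin 2) (Fin 2) R} {I : Ideal R}
    (hA : A.entrySpan = ⊤) (hBA : ∀ i j, B i j - A i j ∈ I) : B.entrySpan ⊔ I = ⊤ := by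
  have hentry : ∀ i j, A i j ∈ B.entrySpan ⊔ I := fun i j => by
    have hB : B i j ∈ B.entrySpan := Ideal.subset_span (by fin_cases i <;> fin_cases j <;> simp)
    rw [← sub_sub_cancel (B i j) (A i j)]
    exact sub_mem (Ideal.mem_sup_left hB) (Ideal.mem_sup_right (hBA i j))
  rw [eq_top_iff, ← hA, entrySpan, Ideal.span_le]
  rintro x (rfl | rfl | rfl | rfl | rfl) <;> exact hentry _ _

theorem exists_sub_mem_span_and_det_mem_span_sq (B : Matrix (Fin 2) (Fin 2) R) (τ : R)
    (hB : B.entrySpan ⊔ Ideal.span {τ} = ⊤) (hdet : B.det ∈ Ideal.span {τ}) :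
    ∃ B' : Matrix (Fin 2) (Fin 2) R,
      (∀ i j, B' i j - B i j ∈ Ideal.span {τ}) ∧ B'.det ∈ Ideal.span {τ ^ 2} := by
  obtain ⟨s, hs⟩ := Ideal.mem_span_singleton'.mp hdet
  obtain ⟨u, hu, z, hz, huz⟩ := Submodule.mem_sup.mp (hB ▸ Submodule.mem_top : -s ∈ _)
  obtain ⟨v, rfl⟩ := Ideal.mem_span_singleton'.mp hz
  simp only [entrySpan, Ideal.mem_span_insert, Ideal.mem_span_singleton'] at hu
  obtain ⟨α, _, ⟨β, _, ⟨γ, _, ⟨δ, rfl⟩, rfl⟩, rfl⟩, rfl⟩ := hu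
  refine ⟨B + τ • !![δ, -γ; -β, α], fun i j => ?_, ?_⟩
  · rw [add_apply, add_sub_cancel_left, smul_apply, smul_eq_mul]
    exact Ideal.mem_span_singleton.mpr (dvd_mul_right _ _)
  · rw [det_add_smul_fin_two, Ideal.mem_span_singleton']
    refine ⟨δ * α - γ * β - v, ?_⟩
    simp only [of_apply, cons_val', cons_val_zero, cons_val_one, empty_val', cons_val_fin_one,
      det_fin_two_of]
    linear_combination hs - τ * huz

end Matrix

theorem stmt17_general {R : Type*} [CommRing R] (A : Matrix (Fin 2) (Fin 2) R)
    (hA : Ideal.span {A 0 0, A 0 1, A 1 0, A 1 1} = (⊤ : Ideal R))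
    (t : R) (ht : A.det ∈ Ideal.span {t}) :
    (∀ n : ℕ, ∃ B : Matrix (Fin 2) (Fin 2) R,
      (∀ i j, B i j - A i j ∈ Ideal.span {t}) ∧
      B.det ∈ Ideal.span {t ^ 2 ^ n}) ∧
    (∀ n : ℕ, 1 ≤ n → ∀ B' : Matrix (Fin 2) (Fin 2) R,
      (∀ i j, B' i j - A i j ∈ Ideal.span {t}) →
      B'.det ∈ Ideal.span {t ^ 2 ^ (n - 1)} →
      ∃ B : Matrix (Fin 2) (Fin 2) R,
        (∀ i j, B i j - B' i j ∈ Ideal.span {t ^ 2 ^ (n - 1)}) ∧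
        B.det ∈ Ideal.span {t ^ 2 ^ n}) := by
  have step : ∀ n : ℕ, 1 ≤ n → ∀ B' : Matrix (Fin 2) (Fin 2) R,
      (∀ i j, B' i j - A i j ∈ Ideal.span {t}) →
      B'.det ∈ Ideal.span {t ^ 2 ^ (n - 1)} →
      ∃ B : Matrix (Fin 2) (Fin 2) R,
        (∀ i j, B i j - B' i j ∈ Ideal.span {t ^ 2 ^ (n - 1)}) ∧
        B.det ∈ Ideal.span {t ^ 2 ^ n} := by
    intro n hn B' hB'A hdet
    have hcop : B'.entrySpan ⊔ Ideal.span {t ^ 2 ^ (n - 1)} = ⊤ := by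
      rw [← Ideal.span_singleton_pow]
      exact Ideal.sup_pow_eq_top' (entrySpan_sup_eq_top_of_sub_mem hA hB'A)
    have hsq : (t ^ 2 ^ (n - 1)) ^ 2 = t ^ 2 ^ n := by
      rw [← pow_mul, ← pow_succ, Nat.sub_add_cancel hn]
    simpa only [hsq] using exists_sub_mem_span_and_det_mem_span_sq B' _ hcop hdet
  refine ⟨fun n => ?_, step⟩
  induction n with
  | zero => exact ⟨A, by simp, by simpa using ht⟩
  | succ n ih =>
    obtain ⟨B, hBA, hdet⟩ := ih
    obtain ⟨B', hB'B, hdet'⟩ := step (n + 1) n.succ_pos B hBA hdet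
    have hle : Ideal.span {t ^ 2 ^ n} ≤ Ideal.span {t} :=
      Ideal.span_singleton_le_span_singleton.mpr (dvd_pow_self t (pow_ne_zero _ two_ne_zero))
    exact ⟨B', fun i j => sub_add_sub_cancel (B' i j) (B i j) (A i j) ▸
      add_mem (hle (hB'B i j)) (hBA i j), hdet'⟩

theorem stmt17 {R : Type*} [CommRing R] (A : Matrix (Fin 2) (Fin 2) R)
    (hA : Ideal.span {A 0 0, A 0 1, A 1 0, A 1 1} = (⊤ : Ideal R))
    (t : R) (ht : A.det ∈ Ideal.span {t})
    (hc : IsAdicComplete (Ideal.span {t}) R) :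
    (∀ n : ℕ, ∃ B : Matrix (Fin 2) (Fin 2) R,
      (∀ i j, B i j - A i j ∈ Ideal.span {t}) ∧
      B.det ∈ Ideal.span {t ^ 2 ^ n}) ∧
    (∀ n : ℕ, 1 ≤ n → ∀ B' : Matrix (Fin 2) (Fin 2) R,
      (∀ i j, B' i j - A i j ∈ Ideal.span {t}) →
      B'.det ∈ Ideal.span {t ^ 2 ^ (n - 1)} →
      ∃ B : Matrix (Fin 2) (Fin 2) R,
        (∀ i j, B i j - B' i j ∈ Ideal.span {t ^ 2 ^ (n - 1)}) ∧
        B.det ∈ Ideal.span {t ^ 2 ^ n}) :=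
  stmt17_general A hA t ht
end
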